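/- arXiv:2202.05232 — 6 statements merged into one kernel-verified Lean document; each statement's English description precedes it below -/
import Mathlib

section
/- If an arrangement (X*, {s_f}_{f∈F}) is stable, then the assignment X* is efficient; that is, for every feasible assignment X of workers to firms, the total match value satisfies U(X) ≤ U(X*). -/
open Finset

namespace TwoSidedMatching

variable {W F : Type*} [Fintype W] [DecidableEq W] [Fintype F] [DecidableEq F]

/-- The set of workers assigned to firm `f` under assignment `X`. -/
def assigned (X : W → Option F) (f : F) : Finset W :=
  Finset.univ.filter fun w => X w = some f

/-- Payoff of worker `w`: `a w f + s w f` if matched to `f`, and `0` if unmatched. -/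
def workerPayoff (a s : W → F → ℝ) (X : W → Option F) (w : W) : ℝ :=
  match X w with
  | some f => a w f + s w f
  | none => 0

/-- Payoff of firm `f`: value of its assigned set minus total salaries paid. -/
def firmPayoff (b : Finset W → F → ℝ) (s : W → F → ℝ) (X : W → Option F) (f : F) : ℝ :=
  b (assigned X f) f - ∑ w ∈ assigned X f, s w f

/-- An assignment is feasible if each firm's assigned set is feasible or empty. -/
def Feasible (𝒯 : F → Set (Finset W)) (X : W → Option F) : Prop :=
  ∀ f : F, assigned X f ∈ 𝒯 f ∨ assigned X f = ∅

/-- r-feasibility: each firm's assigned set is feasible. -/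
def RFeasible (𝒯 : F → Set (Finset W)) (X : W → Option F) : Prop :=
  ∀ f : F, assigned X f ∈ 𝒯 f

/-- A blocking coalition: a firm `f`, a feasible set `D ∈ 𝒯 f`, and salaries `r`
making all members of `D ∪ {f}` weakly better off and at least one strictly better off. -/
def Blocks (a : W → F → ℝ) (b : Finset W → F → ℝ) (𝒯 : F → Set (Finset W))
    (s : W → F → ℝ) (X : W → Option F) : Prop :=
  ∃ f : F, ∃ D ∈ 𝒯 f, ∃ r : W → ℝ,
    (∀ w ∈ D, a w f + r w ≥ workerPayoff a s X w) ∧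
    (b D f - ∑ w ∈ D, r w ≥ firmPayoff b s X f) ∧
    ((∃ w ∈ D, a w f + r w > workerPayoff a s X w) ∨
      b D f - ∑ w ∈ D, r w > firmPayoff b s X f)

/-- Stability: feasible, individually rational for workers and firms, and no blocking coalition. -/
def Stable (a : W → F → ℝ) (b : Finset W → F → ℝ) (𝒯 : F → Set (Finset W))
    (s : W → F → ℝ) (X : W → Option F) : Prop :=
  Feasible 𝒯 X ∧ (∀ w, 0 ≤ workerPayoff a s X w) ∧
    (∀ f, 0 ≤ firmPayoff b s X f) ∧ ¬ Blocks a b 𝒯 s X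

/-- r-stability: r-feasible, individually rational for workers, and no blocking coalition. -/
def RStable (a : W → F → ℝ) (b : Finset W → F → ℝ) (𝒯 : F → Set (Finset W))
    (s : W → F → ℝ) (X : W → Option F) : Prop :=
  RFeasible 𝒯 X ∧ (∀ w, 0 ≤ workerPayoff a s X w) ∧ ¬ Blocks a b 𝒯 s X

/-- Total match value of an assignment. -/
def totalValue (a : W → F → ℝ) (b : Finset W → F → ℝ) (X : W → Option F) : ℝ :=
  (∑ w : W, match X w with
    | some f => a w f
    | none => 0) +
  ∑ f : F, b (assigned X f) f

/-- Two sets are intersecting if their intersection and both differences are nonempty. -/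
def IntersectingSets (A B : Finset W) : Prop :=
  (A ∩ B).Nonempty ∧ (A \ B).Nonempty ∧ (B \ A).Nonempty

/-- An intersecting family: does not contain `∅` and is closed under
intersections and unions of intersecting members. -/
def IntersectingFamily (ℋ : Set (Finset W)) : Prop :=
  ∅ ∉ ℋ ∧ ∀ A ∈ ℋ, ∀ B ∈ ℋ, IntersectingSets A B → A ∩ B ∈ ℋ ∧ A ∪ B ∈ ℋ

/-- Submodularity on intersecting pairs of a family. -/
def SubmodularOnIntersecting (ℋ : Set (Finset W)) (g : Finset W → ℤ) : Prop :=
  ∀ A ∈ ℋ, ∀ B ∈ ℋ, IntersectingSets A B → g (A ∪ B) + g (A ∩ B) ≤ g A + g B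

/-- Supermodularity on intersecting pairs of a family. -/
def SupermodularOnIntersecting (ℋ : Set (Finset W)) (g : Finset W → ℤ) : Prop :=
  ∀ A ∈ ℋ, ∀ B ∈ ℋ, IntersectingSets A B → g A + g B ≤ g (A ∪ B) + g (A ∩ B)

/-- A hierarchy: `∅` is not a member and any two members are nested or disjoint. -/
def Hierarchy (ℋ : Set (Finset W)) : Prop :=
  ∅ ∉ ℋ ∧ ∀ A ∈ ℋ, ∀ B ∈ ℋ, A ⊆ B ∨ B ⊆ A ∨ A ∩ B = ∅

/-- Feasible sets under upper-bound quotas: `|D ∩ D'| ≤ lam D'` for every `D' ∈ ℋ`. -/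
def upperSets (ℋ : Set (Finset W)) (lam : Finset W → ℤ) : Set (Finset W) :=
  {D | ∀ D' ∈ ℋ, ((D ∩ D').card : ℤ) ≤ lam D'}

/-- Feasible sets under lower and upper quotas: `lo D' ≤ |D ∩ D'| ≤ hi D'` for `D' ∈ ℋ`. -/
def quotaSets (ℋ : Set (Finset W)) (lo hi : Finset W → ℤ) : Set (Finset W) :=
  {D | ∀ D' ∈ ℋ, lo D' ≤ ((D ∩ D').card : ℤ) ∧ ((D ∩ D').card : ℤ) ≤ hi D'}

/-- Feasibility for the matching LP with upper-bound constraints. -/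
def LPFeasible (ℋ : F → Set (Finset W)) (lam : F → Finset W → ℤ) (x : W → F → ℝ) : Prop :=
  (∀ w f, 0 ≤ x w f) ∧ (∀ w, ∑ f : F, x w f ≤ 1) ∧
    ∀ f : F, ∀ D ∈ ℋ f, ∑ w ∈ D, x w f ≤ (lam f D : ℝ)

/-- Feasibility for the matching LP with lower and upper bound constraints. -/
def LPLBFeasible (ℋ : F → Set (Finset W)) (lo hi : F → Finset W → ℤ) (x : W → F → ℝ) : Prop :=
  (∀ w f, 0 ≤ x w f) ∧ (∀ w, ∑ f : F, x w f ≤ 1) ∧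
    ∀ f : F, ∀ D ∈ ℋ f, (lo f D : ℝ) ≤ ∑ w ∈ D, x w f ∧ ∑ w ∈ D, x w f ≤ (hi f D : ℝ)

/-- The LP objective: total match value of a fractional assignment. -/
def LPobj (α : W → F → ℝ) (x : W → F → ℝ) : ℝ :=
  ∑ w : W, ∑ f : F, α w f * x w f



lemma sum_assigned {W F : Type*} [Fintype W] [DecidableEq W] [Fintype F] [DecidableEq F]
    (X : W → Option F) (g : W → F → ℝ) :
    ∑ f : F, ∑ w ∈ assigned X f, g w f
      = ∑ w : W, match X w with | some f => g w f | none => 0 := by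
  simp only [assigned, Finset.sum_filter]
  rw [Finset.sum_comm]
  refine Finset.sum_congr rfl fun w _ => ?_
  cases hX : X w with
  | none => simp [hX]
  | some f0 =>
    simp only [hX, Option.some.injEq]
    rw [Finset.sum_ite_eq Finset.univ f0 (fun f => g w f)]
    simp

/-- **Efficiency of stable arrangements.** If an arrangement `(X*, s)` is stable, then
the assignment `X*` is efficient: every feasible assignment `X` satisfies `U(X) ≤ U(X*)`. -/
theorem efficiency_of_stable_arrangements
    {W F : Type*} [Fintype W] [DecidableEq W] [Fintype F] [DecidableEq F]
    (a : W → F → ℝ) (b : Finset W → F → ℝ) (𝒯 : F → Set (Finset W))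
    (hb : ∀ f : F, b ∅ f = 0)
    (s : W → F → ℝ) (Xstar : W → Option F)
    (hstable : Stable a b 𝒯 s Xstar) :
    ∀ X : W → Option F, Feasible 𝒯 X → totalValue a b X ≤ totalValue a b Xstar := by
  intro X hX
  obtain ⟨hXsF, hu, hv, hnb⟩ := hstable
  set u : W → ℝ := workerPayoff a s Xstar with hu_def
  set v : F → ℝ := firmPayoff b s Xstar with hv_def
  -- key inequality from no blocking
  have key : ∀ f : F, ∀ D ∈ 𝒯 f, b D f ≤ v f + ∑ w ∈ D, (u w - a w f) := by
    intro f D hD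
    by_contra hlt
    push_neg at hlt
    apply hnb
    refine ⟨f, D, hD, fun w => u w - a w f, ?_, ?_, ?_⟩
    · intro w _
      show a w f + (u w - a w f) ≥ workerPayoff a s Xstar w
      have h : workerPayoff a s Xstar w = u w := rfl
      rw [h]; linarith
    · have : b D f - ∑ w ∈ D, (u w - a w f) ≥ v f := by linarith
      exact this
    · right
      have : b D f - ∑ w ∈ D, (u w - a w f) > v f := by linarith
      exact this
  -- bound firm values under X
  have hfirm : ∀ f : F, b (assigned X f) f ≤ v f + ∑ w ∈ assigned X f, (u w - a w f) := by
    intro f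
    rcases hX f with h | h
    · exact key f _ h
    · rw [h]; simp [hb f]; exact hv f
  have h1 : totalValue a b X ≤
      (∑ w : W, match X w with | some f => a w f | none => 0)
      + ∑ f : F, (v f + ∑ w ∈ assigned X f, (u w - a w f)) := by
    unfold totalValue
    gcongr with f _
    exact hfirm f
  rw [Finset.sum_add_distrib, sum_assigned X (fun w f => u w - a w f)] at h1
  have h2 : (∑ w : W, match X w with | some f => a w f | none => 0)
      + (∑ w : W, match X w with | some f => u w - a w f | none => 0)
      ≤ ∑ w : W, u w := by
    rw [← Finset.sum_add_distrib]
    apply Finset.sum_le_sum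
    intro w _
    cases hXw : X w with
    | none => simpa using hu w
    | some f0 => simp
  have h3 : ∑ w : W, u w + ∑ f : F, v f = totalValue a b Xstar := by
    have hsplit : ∀ w : W, u w = (match Xstar w with | some f => a w f | none => 0)
        + (match Xstar w with | some f => s w f | none => 0) := by
      intro w
      simp only [hu_def, workerPayoff]
      cases Xstar w <;> simp
    have hv' : ∀ f : F, v f = b (assigned Xstar f) f - ∑ w ∈ assigned Xstar f, s w f := by
      intro f; rfl
    simp only [hsplit, hv', Finset.sum_add_distrib, Finset.sum_sub_distrib]
    rw [sum_assigned Xstar (fun w f => s w f)]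
    unfold totalValue
    ring
  linarith

end TwoSidedMatching
end

section
/- There exists a market instance with three workers and two firms, where firms have linear preferences over workers and only upper-bound hiring quotas, that admits no stable arrangement. Specifically, take workers w1, w2, w3 and firms f1, f2; firm f1's feasible sets are those D ⊆ {w1,w2,w3} with |D| ≤ 2, |D ∩ {w1,w2}| ≤ 1, and |D ∩ {w2,w3}| ≤ 1; firm f2's feasible sets are those D with |D| ≤ 2, |D ∩ {w1,w3}| ≤ 1, and |D ∩ {w2,w3}| ≤ 1; and the match values are α(w1,f1) = 0.9, α(w2,f1) = 1.1, α(w3,f1) = 1, α(w1,f2) = 0.8, α(w2,f2) = 1, α(w3,f2) = 1.1. Then for any worker values a and firm per-worker values c with a(w,f) + c(w,f) = α(w,f) for all pairs, no stable arrangement exists. -/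
/-! Write `wᵢ` for the worker `i - 1 : Fin 3` and `fⱼ` for the firm `j - 1 : Fin 2`.
If no coalition blocks, the coalitions `{w₂} ∪ {f₁}`, `{w₁, w₃} ∪ {f₁}`, `{w₃} ∪ {f₂}` and
`{w₁, w₂} ∪ {f₂}` each receive at least their match value; every agent belongs to exactly two
of them, so twice the total payoff is at least `1.1 + 1.9 + 1.1 + 1.8 = 5.9`. Salaries cancel,
so the total payoff is the match value of the assignment, and the quotas keep that value at
most `2.9` (attained by `w₁, w₃ ↦ f₁`, `w₂ ↦ f₂`). -/


open Finset

namespace TwoSidedMatching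

variable {W F : Type*}

theorem sum_workerPayoff_add_sum_firmPayoff [Fintype W] [Fintype F] [DecidableEq F]
    (a s : W → F → ℝ) (b : Finset W → F → ℝ) (X : W → Option F) :
    ∑ w, workerPayoff a s X w + ∑ f, firmPayoff b s X f = totalValue a b X := by
  have hsalaries : ∑ f, ∑ w ∈ assigned X f, s w f =
      ∑ w, (match X w with | some f => s w f | none => 0) := by
    simp only [assigned, sum_filter]
    rw [sum_comm]
    refine sum_congr rfl fun w _ => ?_
    rcases X w with _ | f <;> simp
  have hworkers : ∑ w, workerPayoff a s X w =
      ∑ w, (match X w with | some f => a w f | none => 0) +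
        ∑ w, (match X w with | some f => s w f | none => 0) := by
    rw [← sum_add_distrib]
    refine sum_congr rfl fun w _ => ?_
    unfold workerPayoff
    rcases X w with _ | f <;> simp
  simp only [firmPayoff, sum_sub_distrib, hsalaries, hworkers, totalValue]
  ring

theorem totalValue_linear [Fintype W] [Fintype F] [DecidableEq F]
    (a c : W → F → ℝ) (X : W → Option F) :
    totalValue a (fun D f => ∑ w ∈ D, c w f) X =
      ∑ w, (match X w with | some f => a w f + c w f | none => 0) := by
  simp only [totalValue, assigned, sum_filter]
  rw [sum_comm, ← sum_add_distrib]
  refine sum_congr rfl fun w _ => ?_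
  rcases X w with _ | f <;> simp

/-- Otherwise `D` and `f` block: pay each `w ∈ D` its current payoff and let `f` keep the surplus. -/
theorem add_sum_le_of_not_blocks [Fintype W] [DecidableEq F]
    {a s : W → F → ℝ} {b : Finset W → F → ℝ} {𝒯 : F → Set (Finset W)} {X : W → Option F}
    (hX : ¬ Blocks a b 𝒯 s X) {f : F} {D : Finset W} (hD : D ∈ 𝒯 f) :
    b D f + ∑ w ∈ D, a w f ≤ ∑ w ∈ D, workerPayoff a s X w + firmPayoff b s X f := by
  by_contra! hsurplus
  refine hX ⟨f, D, hD, fun w => workerPayoff a s X w - a w f, fun w _ => by simp, ?_, Or.inr ?_⟩ <;>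
  · rw [sum_sub_distrib]
    linarith

theorem Feasible.assigned_mem [Fintype W] [DecidableEq F] {𝒯 : F → Set (Finset W)}
    {X : W → Option F} (hX : Feasible 𝒯 X) {w : W} {f : F} (hw : X w = some f) :
    assigned X f ∈ 𝒯 f :=
  (hX f).resolve_right (ne_empty_of_mem (a := w) (by simp [assigned, hw]))

theorem not_mem_of_card_inter_pair_le_one [DecidableEq W] [Fintype W] [DecidableEq F]
    {X : W → Option F} {f : F} {w₁ w₂ : W} (hne : w₁ ≠ w₂)
    (hcard : (assigned X f ∩ {w₁, w₂}).card ≤ 1) (h₁ : X w₁ = some f) : X w₂ ≠ some f := by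
  intro h₂
  have hpair : assigned X f ∩ {w₁, w₂} = {w₁, w₂} :=
    inter_eq_right.2 (by simp [insert_subset_iff, assigned, h₁, h₂])
  rw [hpair, card_pair hne] at hcard
  omega

def exampleValue : Fin 3 → Fin 2 → ℝ := ![![0.9, 0.8], ![1.1, 1], ![1, 1.1]]

def exampleFeasibleSets : Fin 2 → Set (Finset (Fin 3)) := fun f =>
  if f = 0 then
    {D | D.card ≤ 2 ∧ (D ∩ {0, 1}).card ≤ 1 ∧ (D ∩ {1, 2}).card ≤ 1}
  else
    {D | D.card ≤ 2 ∧ (D ∩ {0, 2}).card ≤ 1 ∧ (D ∩ {1, 2}).card ≤ 1}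

theorem Feasible.example_exclusions {X : Fin 3 → Option (Fin 2)}
    (hX : Feasible exampleFeasibleSets X) :
    (X 0 = some 0 → X 1 ≠ some 0) ∧ (X 1 = some 0 → X 2 ≠ some 0) ∧
      (X 0 = some 1 → X 2 ≠ some 1) ∧ (X 1 = some 1 → X 2 ≠ some 1) := by
  refine ⟨fun h => ?_, fun h => ?_, fun h => ?_, fun h => ?_⟩ <;>
  · have hD := hX.assigned_mem h
    simp only [exampleFeasibleSets, Fin.isValue, one_ne_zero, ↓reduceIte, Set.mem_ofPred_eq] at hD
    first
      | exact not_mem_of_card_inter_pair_le_one (by decide) hD.2.1 h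
      | exact not_mem_of_card_inter_pair_le_one (by decide) hD.2.2 h

theorem example_totalValue_le_of_feasible {a c : Fin 3 → Fin 2 → ℝ} {X : Fin 3 → Option (Fin 2)}
    (hα : ∀ w f, a w f + c w f = exampleValue w f) (hX : Feasible exampleFeasibleSets X) :
    totalValue a (fun D f => ∑ w ∈ D, c w f) X ≤ 2.9 := by
  obtain ⟨h₀₁, h₁₂, h₀₂, h₁₂'⟩ := hX.example_exclusions
  rw [totalValue_linear, Fin.sum_univ_three]
  simp only [hα]
  generalize X 0 = x₀ at *
  generalize X 1 = x₁ at *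
  generalize X 2 = x₂ at *
  rcases x₀ with _ | f₀ <;> rcases x₁ with _ | f₁ <;> rcases x₂ with _ | f₂ <;>
    (try fin_cases f₀) <;> (try fin_cases f₁) <;> (try fin_cases f₂) <;>
    simp_all [exampleValue] <;> norm_num

theorem example_sum_payoffs_ge_of_not_blocks {a c s : Fin 3 → Fin 2 → ℝ}
    {X : Fin 3 → Option (Fin 2)} (hα : ∀ w f, a w f + c w f = exampleValue w f)
    (hX : ¬ Blocks a (fun D f => ∑ w ∈ D, c w f) exampleFeasibleSets s X) :
    2.95 ≤ ∑ w, workerPayoff a s X w + ∑ f, firmPayoff (fun D f => ∑ w ∈ D, c w f) s X f := by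
  have h₁ := add_sum_le_of_not_blocks hX (f := 0) (D := {1}) (by simp [exampleFeasibleSets])
  have h₂ := add_sum_le_of_not_blocks hX (f := 0) (D := {0, 2}) (by simp [exampleFeasibleSets])
  have h₃ := add_sum_le_of_not_blocks hX (f := 1) (D := {2}) (by simp [exampleFeasibleSets])
  have h₄ := add_sum_le_of_not_blocks hX (f := 1) (D := {0, 1}) (by simp [exampleFeasibleSets])
  obtain ⟨h₀₀, h₀₁, h₁₀, h₁₁, h₂₀, h₂₁⟩ :
      a 0 0 + c 0 0 = 0.9 ∧ a 0 1 + c 0 1 = 0.8 ∧ a 1 0 + c 1 0 = 1.1 ∧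
        a 1 1 + c 1 1 = 1 ∧ a 2 0 + c 2 0 = 1 ∧ a 2 1 + c 2 1 = 1.1 :=
    ⟨hα 0 0, hα 0 1, hα 1 0, hα 1 1, hα 2 0, hα 2 1⟩
  simp only [sum_singleton, sum_pair (show (0 : Fin 3) ≠ 2 by decide),
    sum_pair (show (0 : Fin 3) ≠ 1 by decide)] at h₁ h₂ h₃ h₄
  rw [Fin.sum_univ_three, Fin.sum_univ_two]
  linarith

/-- **Non-existence of stable arrangements.** A market with three workers, two firms,
linear firm preferences, and only upper-bound hiring quotas that admits no stable
arrangement, for any worker values `a` and per-worker firm values `c` realizing the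
given match values `α`. -/
theorem no_stable_arrangement_exists
    (a c : Fin 3 → Fin 2 → ℝ)
    (hα : ∀ w f, a w f + c w f =
      (![![(0.9 : ℝ), 0.8], ![1.1, 1], ![1, 1.1]] : Fin 3 → Fin 2 → ℝ) w f) :
    ¬ ∃ (X : Fin 3 → Option (Fin 2)) (s : Fin 3 → Fin 2 → ℝ),
        Stable a (fun D f => ∑ w ∈ D, c w f)
          (fun f => if f = 0 then
              {D : Finset (Fin 3) | D.card ≤ 2 ∧ (D ∩ {0, 1}).card ≤ 1 ∧
                (D ∩ {1, 2}).card ≤ 1}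
            else
              {D : Finset (Fin 3) | D.card ≤ 2 ∧ (D ∩ {0, 2}).card ≤ 1 ∧
                (D ∩ {1, 2}).card ≤ 1})
          s X := by
  rintro ⟨X, s, hfeasible, -, -, hnoblock⟩
  have hlower := example_sum_payoffs_ge_of_not_blocks hα hnoblock
  have hupper := example_totalValue_le_of_feasible hα hfeasible
  rw [sum_workerPayoff_add_sum_firmPayoff] at hlower
  linarith

end TwoSidedMatching
end

section
/- An arrangement (X*, {s_f}_{f∈F}) is r-stable if and only if it is r-feasible, individually rational for all workers, and for every firm f ∈ F and every feasible set of workers D ∈ 𝒯_f it holds that Σ_{w∈D} a(w,f) + b(D,f) ≤ Σ_{w∈D} u_w + v_f, where u and v are the payoff vectors of the workers and firms under (X*, {s_f}_{f∈F}). -/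
open Finset

namespace TwoSidedMatching

variable {W F : Type*} [Fintype W] [DecidableEq W] [Fintype F] [DecidableEq F]

/-- **Necessary and sufficient condition for r-stability.** An arrangement `(X*, s)` is
r-stable iff it is r-feasible, individually rational for all workers, and for every firm
`f` and every feasible set `D ∈ 𝒯 f`, `Σ_{w∈D} a w f + b D f ≤ Σ_{w∈D} u w + v f`. -/
theorem rstable_iff_no_improving_coalition
    {W F : Type*} [Fintype W] [DecidableEq W] [Fintype F] [DecidableEq F]
    (a : W → F → ℝ) (b : Finset W → F → ℝ) (𝒯 : F → Set (Finset W))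
    (hb : ∀ f : F, b ∅ f = 0)
    (s : W → F → ℝ) (Xstar : W → Option F) :
    RStable a b 𝒯 s Xstar ↔
      RFeasible 𝒯 Xstar ∧ (∀ w, 0 ≤ workerPayoff a s Xstar w) ∧
        ∀ f : F, ∀ D ∈ 𝒯 f,
          (∑ w ∈ D, a w f) + b D f ≤
            (∑ w ∈ D, workerPayoff a s Xstar w) + firmPayoff b s Xstar f := by
  constructor
  · rintro ⟨hf, hw, hnb⟩
    refine ⟨hf, hw, fun f D hD => ?_⟩
    by_contra h
    push_neg at h
    refine hnb ⟨f, D, hD, fun w => workerPayoff a s Xstar w - a w f,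
      fun w _ => by simp, ?_, Or.inr ?_⟩
    · rw [Finset.sum_sub_distrib]; linarith
    · rw [Finset.sum_sub_distrib]; linarith
  · rintro ⟨hf, hw, hcond⟩
    refine ⟨hf, hw, ?_⟩
    rintro ⟨f, D, hD, r, h1, h2, h3⟩
    have hsum : ∑ w ∈ D, workerPayoff a s Xstar w ≤ ∑ w ∈ D, (a w f + r w) :=
      Finset.sum_le_sum h1
    have hc := hcond f D hD
    rw [Finset.sum_add_distrib] at hsum
    rcases h3 with ⟨w0, hw0, hlt⟩ | hlt
    · have : ∑ w ∈ D, workerPayoff a s Xstar w < ∑ w ∈ D, (a w f + r w) :=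
        Finset.sum_lt_sum h1 ⟨w0, hw0, hlt⟩
      rw [Finset.sum_add_distrib] at this
      linarith
    · linarith

end TwoSidedMatching
end

section
/- In a market with exactly one firm f, for every nonempty family 𝒯_f of feasible sets of workers, every firm value function b, and arbitrary worker values a, there exists an r-stable arrangement. -/
open Finset

/-! A single firm hires a set `D` of maximal joint surplus `b D + ∑_{w ∈ D} a w` and
pays every worker `-a`, leaving each worker with payoff `0` and the firm with the whole
surplus of `D`. A blocking coalition `E` must give its workers nonnegative payoffs and the
firm at least that much, strictly for someone, so `E` would have strictly larger surplus. -/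

namespace TwoSidedMatching

variable {W F : Type*}

def surplus (a : W → F → ℝ) (b : Finset W → F → ℝ) (f : F) (D : Finset W) : ℝ :=
  b D f + ∑ w ∈ D, a w f

def hire [DecidableEq W] (D : Finset W) (f : F) : W → Option F :=
  fun w => if w ∈ D then some f else none

@[simp]
theorem workerPayoff_neg_self (a : W → F → ℝ) (X : W → Option F) (w : W) :
    workerPayoff a (-a) X w = 0 := by
  unfold workerPayoff
  split <;> simp

section

variable [Fintype W] [DecidableEq F]

theorem assigned_hire [DecidableEq W] (D : Finset W) (f : F) : assigned (hire D f) f = D := by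
  ext w
  by_cases hw : w ∈ D <;> simp [assigned, hire, hw]

@[simp]
theorem firmPayoff_neg_self (a : W → F → ℝ) (b : Finset W → F → ℝ) (X : W → Option F)
    (f : F) : firmPayoff b (-a) X f = surplus a b f (assigned X f) := by
  simp [firmPayoff, surplus, sub_eq_add_neg]

variable {a : W → F → ℝ} {b : Finset W → F → ℝ} {𝒯 : F → Set (Finset W)} {X : W → Option F}

theorem not_blocks_neg_of_surplus_le
    (hmax : ∀ f, ∀ E ∈ 𝒯 f, surplus a b f E ≤ surplus a b f (assigned X f)) :
    ¬ Blocks a b 𝒯 (-a) X := by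
  rintro ⟨f, E, hE, r, hworkers, hfirm, hstrict⟩
  simp only [workerPayoff_neg_self, firmPayoff_neg_self, ge_iff_le] at hworkers hfirm hstrict
  have hsplit : surplus a b f E = (b E f - ∑ w ∈ E, r w) + ∑ w ∈ E, (a w f + r w) := by
    rw [surplus, sum_add_distrib]
    ring
  have hmaxE := hmax f E hE
  rcases hstrict with ⟨w, hwE, hw⟩ | hlt
  · have hgain : 0 < ∑ w ∈ E, (a w f + r w) := sum_pos' hworkers ⟨w, hwE, hw⟩
    linarith
  · have hgain : 0 ≤ ∑ w ∈ E, (a w f + r w) := sum_nonneg hworkers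
    linarith

theorem rStable_neg_of_surplus_le (hX : RFeasible 𝒯 X)
    (hmax : ∀ f, ∀ E ∈ 𝒯 f, surplus a b f E ≤ surplus a b f (assigned X f)) :
    RStable a b 𝒯 (-a) X :=
  ⟨hX, fun w => (workerPayoff_neg_self a X w).ge, not_blocks_neg_of_surplus_le hmax⟩

end

theorem one_firm_rstable_exists_general
    {W F : Type*} [Fintype W] [DecidableEq W] [DecidableEq F] [Unique F]
    (a : W → F → ℝ) (b : Finset W → F → ℝ) (𝒯 : F → Set (Finset W))
    (hne : ∀ f : F, (𝒯 f).Nonempty) :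
    ∃ (X : W → Option F) (s : W → F → ℝ), RStable a b 𝒯 s X := by
  obtain ⟨D, hD, hmax⟩ :=
    Set.exists_max_image (𝒯 default) (surplus a b default) (Set.toFinite _) (hne default)
  refine ⟨hire D default, -a, rStable_neg_of_surplus_le (fun f => ?_) (fun f => ?_)⟩ <;>
    rw [Unique.eq_default f, assigned_hire]
  exacts [hD, hmax]

/-- **Existence of an r-stable arrangement with one firm.** In a one-firm market with a
nonempty family of feasible sets and arbitrary firm value function and worker values,
an r-stable arrangement exists. -/
theorem one_firm_rstable_exists
    {W F : Type*} [Fintype W] [DecidableEq W] [Fintype F] [DecidableEq F] [Unique F]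
    (a : W → F → ℝ) (b : Finset W → F → ℝ) (𝒯 : F → Set (Finset W))
    (hne : ∀ f : F, (𝒯 f).Nonempty) :
    ∃ (X : W → Option F) (s : W → F → ℝ), RStable a b 𝒯 s X :=
  one_firm_rstable_exists_general a b 𝒯 hne

end TwoSidedMatching
end

section
/- Suppose the linear program (LP-LB) — maximize Σ_{w∈W} Σ_{f∈F} α(w,f) x_{w,f} over x ∈ ℝ^{W×F} subject to x ≥ 0, Σ_{f∈F} x_{w,f} ≤ 1 for every worker w, and λ_D ≤ Σ_{w∈D} x_{w,f} ≤ λ̄_D for every firm f and D ∈ ℋ_f — has an optimal solution X* with X*_{w,f} ∈ {0,1} for all (w,f). Then there exist salaries s : W × F → ℝ such that the arrangement (X*, s) is r-feasible and individually rational for all workers, and its payoffs u, v satisfy Σ_{w∈D} α(w,f) ≤ Σ_{w∈D} u_w + v_f for every firm f and every feasible set D ∈ 𝒯_f; in particular (X*, s) is an r-stable arrangement. -/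
/-!
The worker constraints `∑ f, x w f ≤ 1` of the LP are dualised: LP duality (derived from Farkas'
lemma) gives prices `u ≥ 0`, vanishing on workers that `x` leaves unassigned, such that each
firm's column of `x` maximises `∑ w ∈ D, (α w f - u w)` over that firm's quota polytope, hence
over `𝒯 f`. When `x` is integral, the salaries `s w f = u w - a w f` give each worker the payoff
`u w` and firm `f` the payoff `∑ w ∈ D_f, (α w f - u w)`, so this maximality is the inequality
`∑ w ∈ D, α w f ≤ ∑ w ∈ D, u w + v f`, which no blocking coalition can satisfy.
-/

open Finset

namespace TwoSidedMatching

variable {W F : Type*} [Fintype W] [DecidableEq W] [Fintype F] [DecidableEq F]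

open Matrix Filter Topology

section ConicCombinations

variable {𝕜 E ι : Type*} [Field 𝕜] [LinearOrder 𝕜] [IsStrictOrderedRing 𝕜]
  [AddCommGroup E] [Module 𝕜 E] [Fintype ι]

theorem _root_.PointedCone.mem_hull_range_iff {v : ι → E} {x : E} :
    x ∈ PointedCone.hull 𝕜 (Set.range v) ↔ ∃ t : ι → 𝕜, 0 ≤ t ∧ ∑ i, t i • v i = x := by
  rw [Submodule.mem_span_range_iff_exists_fun]
  constructor
  · rintro ⟨c, rfl⟩
    exact ⟨fun i => c i, fun i => (c i).2, rfl⟩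
  · rintro ⟨t, ht, rfl⟩
    exact ⟨fun i => ⟨t i, ht i⟩, rfl⟩

/-- The minimum-ratio test of the simplex method. -/
theorem _root_.exists_nonneg_sub_smul_eq_zero (t g : ι → 𝕜) (ht : 0 ≤ t) (hg : ∃ i, 0 < g i) :
    ∃ τ : 𝕜, 0 ≤ t - τ • g ∧ ∃ i, 0 < g i ∧ t i - τ * g i = 0 := by
  classical
  obtain ⟨i₀, hi₀, hmin⟩ := (univ.filter (0 < g ·)).exists_min_image (fun i => t i / g i)
    (by simpa [Finset.Nonempty] using hg)
  rw [mem_filter] at hi₀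
  refine ⟨t i₀ / g i₀, fun i => ?_, i₀, hi₀.2, by rw [div_mul_cancel₀ _ hi₀.2.ne', sub_self]⟩
  suffices t i₀ / g i₀ * g i ≤ t i by simpa using this
  rcases le_or_gt (g i) 0 with hgi | hgi
  · exact (mul_nonpos_of_nonneg_of_nonpos (div_nonneg (ht i₀) hi₀.2.le) hgi).trans (ht i)
  · exact (le_div_iff₀ hgi).mp (hmin i (mem_filter.mpr ⟨mem_univ i, hgi⟩))

theorem _root_.exists_pos_of_not_linearIndepOn {v : ι → E} {s : Set ι}
    (hv : ¬ LinearIndepOn 𝕜 v s) :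
    ∃ g : ι → 𝕜, ∑ i, g i • v i = 0 ∧ Function.support g ⊆ s ∧ ∃ i, 0 < g i := by
  obtain ⟨l, hls, hl0, hl⟩ : ∃ l ∈ Finsupp.supported 𝕜 𝕜 s,
      Finsupp.linearCombination 𝕜 v l = 0 ∧ l ≠ 0 := by
    simpa [linearIndepOn_iff] using hv
  rw [Finsupp.linearCombination_apply, Finsupp.sum_fintype _ _ (by simp)] at hl0
  obtain ⟨i, hi⟩ : ∃ i, l i ≠ 0 := by simpa [DFunLike.ext_iff] using hl
  have hsupp : Function.support l ⊆ s := by simpa [Finsupp.mem_supported] using hls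
  rcases hi.lt_or_gt with hneg | hpos
  · exact ⟨-l, by simp [neg_smul, hl0], by simpa using hsupp, i, by simpa using hneg⟩
  · exact ⟨l, hl0, hsupp, i, hpos⟩

/-- **Carathéodory's theorem** for cones. -/
theorem _root_.exists_nonneg_linearIndepOn_support (v : ι → E) (t : ι → 𝕜) (ht : 0 ≤ t) :
    ∃ t' : ι → 𝕜, 0 ≤ t' ∧ ∑ i, t' i • v i = ∑ i, t i • v i ∧
      LinearIndepOn 𝕜 v (Function.support t') := by
  obtain ⟨t', ⟨ht'0, ht'⟩, hmin⟩ :=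
    (measure fun s : ι → 𝕜 => (Function.support s).ncard).wf.has_min
      {s | 0 ≤ s ∧ ∑ i, s i • v i = ∑ i, t i • v i} ⟨t, ht, rfl⟩
  refine ⟨t', ht'0, ht', by_contra fun hdep => ?_⟩
  -- a linear dependence on the support of `t'` lets us shrink that support
  obtain ⟨g, hg, hgs, hgpos⟩ := exists_pos_of_not_linearIndepOn hdep
  obtain ⟨τ, hτ, i, hgi, hti⟩ := exists_nonneg_sub_smul_eq_zero t' g ht'0 hgpos
  refine hmin (t' - τ • g) ⟨hτ, ?_⟩ (Set.ncard_lt_ncard ?_ (Set.toFinite _))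
  · simp [sub_smul, Finset.sum_sub_distrib, mul_smul, ← Finset.smul_sum, hg, ht']
  · have hsub : Function.support (t' - τ • g) ⊆ Function.support t' := by
      intro j hj
      by_contra htj
      have hgj : g j = 0 := by_contra fun h => htj (hgs h)
      simp_all
    exact (Set.ssubset_iff_of_subset hsub).mpr ⟨i, hgs hgi.ne', by simpa using hti⟩

end ConicCombinations

section FiniteCone

variable {E ι : Type*} [AddCommGroup E] [TopologicalSpace E] [IsTopologicalAddGroup E]
  [Module ℝ E] [ContinuousSMul ℝ E] [T2Space E] [Fintype ι]

theorem _root_.PointedCone.isClosed_hull_range (v : ι → E) :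
    IsClosed (PointedCone.hull ℝ (Set.range v) : Set E) := by
  classical
  -- by Carathéodory, the cone is the finite union of the cones over independent subfamilies,
  -- each the image of an orthant under a closed embedding
  have hunion : (PointedCone.hull ℝ (Set.range v) : Set E) =
      ⋃ (s : Finset ι) (_ : LinearIndepOn ℝ v (s : Set ι)),
        Fintype.linearCombination ℝ (fun i : s => v i) '' Set.Ici 0 := by
    refine Set.Subset.antisymm (fun x hx => ?_) (Set.iUnion₂_subset fun s _ => ?_)
    · obtain ⟨t, ht, rfl⟩ := PointedCone.mem_hull_range_iff.mp hx
      obtain ⟨t', ht'0, ht', hli⟩ := exists_nonneg_linearIndepOn_support v t ht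
      refine Set.mem_iUnion₂.mpr ⟨(Function.support t').toFinset, by simpa using hli,
        fun i => t' i, fun i => ht'0 i, ?_⟩
      rw [Fintype.linearCombination_apply, ← ht', Finset.sum_coe_sort _ (fun i => t' i • v i)]
      exact Finset.sum_subset (subset_univ _) (by simp +contextual)
    · rintro _ ⟨u, hu, rfl⟩
      rw [SetLike.mem_coe, Fintype.linearCombination_apply]
      exact Submodule.sum_mem _ fun i _ =>
        PointedCone.smul_mem _ (hu i) (PointedCone.subset_hull ⟨i, rfl⟩)
  rw [hunion]
  exact isClosed_iUnion_of_finite fun s => isClosed_iUnion_of_finite fun hs =>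
    (LinearMap.isClosedEmbedding_of_injective (LinearMap.ker_eq_bot.mpr
      hs.fintypeLinearCombination_injective)).isClosedMap _ isClosed_Ici

end FiniteCone

section LinearProgramming

variable {ι κ : Type*} [Fintype ι] [Fintype κ]

/-- **Farkas' lemma**. -/
theorem _root_.Matrix.exists_nonneg_vecMul_eq_or_exists_mulVec_nonpos (A : Matrix κ ι ℝ)
    (b : ι → ℝ) : (∃ y, 0 ≤ y ∧ y ᵥ* A = b) ∨ ∃ z, A *ᵥ z ≤ 0 ∧ 0 < b ⬝ᵥ z := by
  classical
  by_cases hb : b ∈ PointedCone.hull ℝ (Set.range A)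
  · obtain ⟨y, hy, hyb⟩ := PointedCone.mem_hull_range_iff.mp hb
    exact .inl ⟨y, hy, by rw [vecMul_eq_sum, hyb]⟩
  · let C : ProperCone ℝ (ι → ℝ) := ⟨_, PointedCone.isClosed_hull_range A⟩
    obtain ⟨f, hfC, hfb⟩ := C.hyperplane_separation_point hb
    obtain ⟨y, hy⟩ : ∃ y : ι → ℝ, ∀ x, f x = y ⬝ᵥ x :=
      ⟨(dotProductEquiv ℝ ι).symm f, fun x => (LinearMap.congr_fun
        ((dotProductEquiv ℝ ι).apply_symm_apply (f : Module.Dual ℝ (ι → ℝ))) x).symm⟩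
    refine .inr ⟨-y, fun k => ?_, ?_⟩
    · have := hfC (A k) (PointedCone.subset_hull ⟨k, rfl⟩)
      rw [hy, dotProduct_comm] at this
      simpa [mulVec] using this
    · rw [hy, dotProduct_comm] at hfb
      simpa using hfb

theorem _root_.Matrix.eventually_mulVec_add_smul_le {A : Matrix κ ι ℝ} {d : κ → ℝ} {x z : ι → ℝ}
    (hx : A *ᵥ x ≤ d) (hz : ∀ k, (A *ᵥ x) k = d k → (A *ᵥ z) k ≤ 0) :
    ∀ᶠ ε in 𝓝[>] (0 : ℝ), A *ᵥ (x + ε • z) ≤ d := by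
  simp only [mulVec_add, mulVec_smul, Pi.le_def, Pi.add_apply, Pi.smul_apply, smul_eq_mul]
  refine eventually_all.mpr fun k => ?_
  by_cases hk : (A *ᵥ x) k = d k
  · filter_upwards [self_mem_nhdsWithin] with ε (hε : 0 < ε)
    nlinarith [hz k hk]
  · have hlim : Tendsto (fun ε : ℝ => (A *ᵥ x) k + ε * (A *ᵥ z) k) (𝓝[>] 0)
        (𝓝 ((A *ᵥ x) k)) :=
      tendsto_nhdsWithin_of_tendsto_nhds (by simpa using
        (by fun_prop : Continuous fun ε : ℝ => (A *ᵥ x) k + ε * (A *ᵥ z) k).tendsto 0)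
    exact hlim.eventually (gt_mem_nhds (lt_of_le_of_ne (hx k) hk)) |>.mono fun _ => le_of_lt

/-- **LP duality**, with complementary slackness. -/
theorem _root_.Matrix.exists_dual_of_isMaxOn {A : Matrix κ ι ℝ} {d : κ → ℝ} {c x : ι → ℝ}
    (hx : A *ᵥ x ≤ d) (hmax : IsMaxOn (c ⬝ᵥ ·) {z | A *ᵥ z ≤ d} x) :
    ∃ y, 0 ≤ y ∧ (∀ k, y k ≠ 0 → (A *ᵥ x) k = d k) ∧ y ᵥ* A = c := by
  classical
  -- Farkas' lemma for the rows that are tight at `x`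
  rcases exists_nonneg_vecMul_eq_or_exists_mulVec_nonpos
    (A.submatrix ((↑) : {k // (A *ᵥ x) k = d k} → κ) id) c with ⟨t, ht, htc⟩ | ⟨z, hz, hcz⟩
  · refine ⟨fun k => if h : (A *ᵥ x) k = d k then t ⟨k, h⟩ else 0, fun k => ?_,
      fun k hk => by_contra fun h => hk (dif_neg h), ?_⟩
    · dsimp only
      split_ifs
      exacts [ht _, le_rfl]
    · rw [← htc, vecMul_eq_sum, vecMul_eq_sum,
        ← Fintype.sum_subtype_add_sum_subtype (fun k => (A *ᵥ x) k = d k)]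
      refine (add_eq_left.mpr (Fintype.sum_eq_zero _ fun k => by simp [dif_neg k.2])).trans
        (Fintype.sum_congr _ _ fun k => by simp [dif_pos k.2]; rfl)
  · obtain ⟨ε, hε, hεpos⟩ :=
      ((eventually_mulVec_add_smul_le hx fun k hk => hz ⟨k, hk⟩).and self_mem_nhdsWithin).exists
    have := hmax hε
    simp only [Set.mem_ofPred_eq, dotProduct_add, dotProduct_smul, smul_eq_mul] at this
    nlinarith [mul_pos (show (0 : ℝ) < ε from hεpos) hcz]

/-- Lagrangian duality for the constraints `A₁ *ᵥ z ≤ d₁`. -/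
theorem _root_.Matrix.exists_lagrangeMultiplier_of_isMaxOn {κ₁ κ₂ : Type*} [Fintype κ₁]
    [Fintype κ₂] {A₁ : Matrix κ₁ ι ℝ} {A₂ : Matrix κ₂ ι ℝ} {d₁ : κ₁ → ℝ} {d₂ : κ₂ → ℝ}
    {c x : ι → ℝ} (hx₁ : A₁ *ᵥ x ≤ d₁) (hx₂ : A₂ *ᵥ x ≤ d₂)
    (hmax : IsMaxOn (c ⬝ᵥ ·) {z | A₁ *ᵥ z ≤ d₁ ∧ A₂ *ᵥ z ≤ d₂} x) :
    ∃ u, 0 ≤ u ∧ (∀ k, u k ≠ 0 → (A₁ *ᵥ x) k = d₁ k) ∧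
      IsMaxOn (fun z => c ⬝ᵥ z - u ⬝ᵥ (A₁ *ᵥ z)) {z | A₂ *ᵥ z ≤ d₂} x := by
  obtain ⟨y, hy, hslack, hyc⟩ := exists_dual_of_isMaxOn (A := fromRows A₁ A₂)
    (d := Sum.elim d₁ d₂) (by simpa [fromRows_mulVec] using ⟨hx₁, hx₂⟩)
    (by simpa [isMaxOn_iff, fromRows_mulVec] using hmax)
  set u := y ∘ Sum.inl
  set w := y ∘ Sum.inr
  have hsplit : ∀ z, c ⬝ᵥ z = u ⬝ᵥ (A₁ *ᵥ z) + w ⬝ᵥ (A₂ *ᵥ z) := fun z => by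
    rw [← hyc, ← dotProduct_mulVec, fromRows_mulVec, ← Sum.elim_comp_inl_inr y,
      sumElim_dotProduct_sumElim]
  have hwx : w ⬝ᵥ (A₂ *ᵥ x) = w ⬝ᵥ d₂ := Finset.sum_congr rfl fun k _ => by
    by_cases hk : w k = 0
    · simp [hk]
    · simpa using congrArg (w k * ·) (hslack (.inr k) hk)
  refine ⟨u, fun k => hy _, fun k hk => by simpa using hslack (.inl k) hk, fun z hz => ?_⟩
  have := dotProduct_le_dotProduct_of_nonneg_left (w := w) hz fun k => hy _
  simp only [Set.mem_ofPred_eq, hsplit]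
  linarith

end LinearProgramming

/- (LP-LB) over `z : W × F → ℝ` is `workerMatrix *ᵥ z ≤ 1` together with
`firmMatrix ℋ *ᵥ z ≤ firmBound ℋ lo hi`; the second system (nonnegativity and the quotas)
constrains each firm's column separately. -/

section MatchingLP

variable {W F : Type*} [Fintype W] [Fintype F]

theorem LPobj_curry (α : W → F → ℝ) (z : W × F → ℝ) :
    LPobj α (Function.curry z) = Function.uncurry α ⬝ᵥ z := by
  simp [LPobj, dotProduct, Fintype.sum_prod_type]

variable [DecidableEq W]

def workerMatrix : Matrix W (W × F) ℝ :=
  Matrix.of fun w p => if p.1 = w then 1 else 0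

theorem workerMatrix_mulVec (z : W × F → ℝ) (w : W) :
    (workerMatrix *ᵥ z) w = ∑ f, z (w, f) := by
  simp only [workerMatrix, mulVec, dotProduct, of_apply, ite_mul, one_mul, zero_mul,
    Fintype.sum_prod_type]
  rw [Finset.sum_comm]
  simp

theorem uncurry_dotProduct_sub_dotProduct_workerMatrix_mulVec (α : W → F → ℝ) (u : W → ℝ)
    (z : W × F → ℝ) :
    Function.uncurry α ⬝ᵥ z - u ⬝ᵥ (workerMatrix *ᵥ z) = ∑ f, ∑ w, (α w f - u w) * z (w, f) := by
  simp only [dotProduct, workerMatrix_mulVec, Fintype.sum_prod_type, Function.uncurry_apply_pair,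
    Finset.mul_sum, sub_mul, Finset.sum_sub_distrib]
  rw [Finset.sum_comm]
  congr 1
  exact Finset.sum_comm

variable [DecidableEq F]

def quotaMatrix (ℋ : F → Set (Finset W)) :
    Matrix {q : F × Finset W // q.2 ∈ ℋ q.1} (W × F) ℝ :=
  Matrix.of fun q p => if p.2 = q.1.1 ∧ p.1 ∈ q.1.2 then 1 else 0

def firmMatrix (ℋ : F → Set (Finset W)) :
    Matrix ((W × F) ⊕ ({q : F × Finset W // q.2 ∈ ℋ q.1} ⊕ {q : F × Finset W // q.2 ∈ ℋ q.1}))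
      (W × F) ℝ :=
  fromRows (-1) (fromRows (quotaMatrix ℋ) (-quotaMatrix ℋ))

def firmBound (ℋ : F → Set (Finset W)) (lo hi : F → Finset W → ℤ) :
    (W × F) ⊕ ({q : F × Finset W // q.2 ∈ ℋ q.1} ⊕ {q : F × Finset W // q.2 ∈ ℋ q.1}) → ℝ :=
  Sum.elim 0 (Sum.elim (fun q => hi q.1.1 q.1.2) (fun q => -lo q.1.1 q.1.2))

theorem quotaMatrix_mulVec (ℋ : F → Set (Finset W)) (z : W × F → ℝ) (q) :
    (quotaMatrix ℋ *ᵥ z) q = ∑ w ∈ q.1.2, z (w, q.1.1) := by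
  simp [quotaMatrix, mulVec, dotProduct, Fintype.sum_prod_type, ite_mul, ite_and,
    Finset.sum_ite_mem]

theorem firmMatrix_mulVec_le_iff (ℋ : F → Set (Finset W)) (lo hi : F → Finset W → ℤ)
    (z : W × F → ℝ) :
    firmMatrix ℋ *ᵥ z ≤ firmBound ℋ lo hi ↔ 0 ≤ z ∧ ∀ f, ∀ D ∈ ℋ f,
      (lo f D : ℝ) ≤ ∑ w ∈ D, z (w, f) ∧ ∑ w ∈ D, z (w, f) ≤ hi f D := by
  rw [firmMatrix, firmBound, fromRows_mulVec, fromRows_mulVec, Sum.elim_le_elim_iff,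
    Sum.elim_le_elim_iff]
  simp only [neg_mulVec, one_mulVec, neg_nonpos, Pi.le_def, Pi.neg_apply, quotaMatrix_mulVec,
    neg_le_neg_iff, Subtype.forall]
  exact and_congr_right fun _ => ⟨fun h f D hD => ⟨h.2 (f, D) hD, h.1 (f, D) hD⟩,
    fun h => ⟨fun q hq => (h q.1 q.2 hq).2, fun q hq => (h q.1 q.2 hq).1⟩⟩

theorem LPLBFeasible_curry_iff (ℋ : F → Set (Finset W)) (lo hi : F → Finset W → ℤ)
    (z : W × F → ℝ) :
    LPLBFeasible ℋ lo hi (Function.curry z) ↔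
      workerMatrix *ᵥ z ≤ 1 ∧ firmMatrix ℋ *ᵥ z ≤ firmBound ℋ lo hi := by
  rw [firmMatrix_mulVec_le_iff]
  simp only [LPLBFeasible, Pi.le_def, workerMatrix_mulVec, Pi.one_apply, Pi.zero_apply,
    Function.curry_apply, Prod.forall]
  tauto

theorem firmMatrix_mulVec_ite_le {ℋ : F → Set (Finset W)} {lo hi : F → Finset W → ℤ}
    {z : W × F → ℝ} (hz : firmMatrix ℋ *ᵥ z ≤ firmBound ℋ lo hi) {f : F} {D : Finset W}
    (hD : D ∈ quotaSets (ℋ f) (lo f) (hi f)) :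
    firmMatrix ℋ *ᵥ (fun p => if p.2 = f then (if p.1 ∈ D then 1 else 0) else z p) ≤
      firmBound ℋ lo hi := by
  rw [firmMatrix_mulVec_le_iff] at hz ⊢
  refine ⟨fun p => ?_, fun f' D' hD' => ?_⟩
  · dsimp only
    split_ifs
    exacts [zero_le_one, le_rfl, hz.1 p]
  · by_cases hf' : f' = f
    · subst hf'
      have hcard : ∑ w ∈ D', (if w ∈ D then (1 : ℝ) else 0) = ((D ∩ D').card : ℝ) := by
        simp [Finset.inter_comm]
      simp only [if_true, hcard]
      exact_mod_cast hD D' hD'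
    · simpa [hf'] using hz.2 f' D' hD'

/-- The prices are the Lagrange multipliers of the worker constraints. -/
theorem exists_worker_prices_of_optimal {ℋ : F → Set (Finset W)} {lo hi : F → Finset W → ℤ}
    {α x : W → F → ℝ} (hfeas : LPLBFeasible ℋ lo hi x)
    (hopt : ∀ y, LPLBFeasible ℋ lo hi y → LPobj α y ≤ LPobj α x) :
    ∃ u : W → ℝ, 0 ≤ u ∧ (∀ w, u w ≠ 0 → ∑ f, x w f = 1) ∧
      ∀ f, ∀ D ∈ quotaSets (ℋ f) (lo f) (hi f),
        ∑ w ∈ D, (α w f - u w) ≤ ∑ w, (α w f - u w) * x w f := by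
  classical
  obtain ⟨hx₁, hx₂⟩ := (LPLBFeasible_curry_iff ℋ lo hi (Function.uncurry x)).mp hfeas
  obtain ⟨u, hu0, hslack, hmax⟩ := exists_lagrangeMultiplier_of_isMaxOn hx₁ hx₂
    (c := Function.uncurry α) fun z hz => (LPobj_curry α z).symm.trans_le <|
      (hopt _ ((LPLBFeasible_curry_iff ℋ lo hi z).mpr hz)).trans_eq
        (LPobj_curry α (Function.uncurry x))
  refine ⟨u, hu0, fun w hw => by simpa [workerMatrix_mulVec] using hslack w hw, fun f D hD => ?_⟩
  have key := hmax (firmMatrix_mulVec_ite_le hx₂ hD)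
  simp only [Set.mem_ofPred_eq, uncurry_dotProduct_sub_dotProduct_workerMatrix_mulVec,
    Function.uncurry_apply_pair] at key
  rw [← Finset.add_sum_erase _ _ (mem_univ f), ← Finset.add_sum_erase _ _ (mem_univ f)] at key
  have hothers : ∑ f' ∈ univ.erase f, ∑ w,
      (α w f' - u w) * (if f' = f then (if w ∈ D then 1 else 0) else x w f') =
      ∑ f' ∈ univ.erase f, ∑ w, (α w f' - u w) * x w f' :=
    Finset.sum_congr rfl fun f' hf' => by simp [ne_of_mem_erase hf']
  rw [hothers, add_le_add_iff_right] at key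
  simpa [Finset.sum_ite_mem] using key

end MatchingLP

section Arrangement

variable {W F : Type*}

theorem eq_of_eq_one_of_eq_one [Fintype F] {t : F → ℝ} (ht0 : 0 ≤ t) (ht1 : ∑ f, t f ≤ 1)
    {f f' : F} (hf : t f = 1) (hf' : t f' = 1) : f = f' := by
  classical
  by_contra hne
  have := Finset.sum_le_sum_of_subset_of_nonneg (subset_univ {f, f'}) fun i _ _ => ht0 i
  rw [Finset.sum_pair hne, hf, hf'] at this
  linarith

theorem exists_eq_one_of_sum_eq_one [Fintype F] {t : F → ℝ} (h01 : ∀ f, t f = 0 ∨ t f = 1)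
    (h : ∑ f, t f = 1) : ∃ f, t f = 1 := by
  by_contra! hne
  simp [fun f => (h01 f).resolve_right (hne f)] at h

theorem exists_assignment_iff_eq_one [Fintype F] {x : W → F → ℝ} (hx0 : ∀ w f, 0 ≤ x w f)
    (hx1 : ∀ w, ∑ f, x w f ≤ 1) : ∃ X : W → Option F, ∀ w f, X w = some f ↔ x w f = 1 := by
  classical
  refine ⟨fun w => if h : ∃ f, x w f = 1 then some h.choose else none, fun w f => ?_⟩
  dsimp only
  split_ifs with h
  · rw [Option.some_inj]
    exact ⟨fun hf => hf ▸ h.choose_spec,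
      fun hf => eq_of_eq_one_of_eq_one (hx0 w) (hx1 w) h.choose_spec hf⟩
  · exact ⟨nofun, fun hf => absurd ⟨f, hf⟩ h⟩

theorem workerPayoff_sub_eq {a : W → F → ℝ} {u : W → ℝ} {X : W → Option F}
    (hu : ∀ w, X w = none → u w = 0) (w : W) :
    workerPayoff a (fun w f => u w - a w f) X w = u w := by
  rcases h : X w with _ | f <;> simp [workerPayoff, h, hu]

variable [Fintype W] [DecidableEq F]

theorem sum_mul_eq_sum_assigned_inter [DecidableEq W] {X : W → Option F} {x : W → F → ℝ}
    (hX : ∀ w f, X w = some f ↔ x w f = 1) (h01 : ∀ w f, x w f = 0 ∨ x w f = 1)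
    (g : W → ℝ) (s : Finset W) (f : F) :
    ∑ w ∈ s, g w * x w f = ∑ w ∈ assigned X f ∩ s, g w := by
  rw [assigned, Finset.filter_inter, univ_inter, Finset.sum_filter]
  refine Finset.sum_congr rfl fun w _ => ?_
  rcases h01 w f with h | h <;> simp [hX, h]

theorem firmPayoff_sub_eq (a c : W → F → ℝ) (u : W → ℝ) (X : W → Option F) (f : F) :
    firmPayoff (fun D f => ∑ w ∈ D, c w f) (fun w f => u w - a w f) X f =
      ∑ w ∈ assigned X f, (a w f + c w f - u w) := by
  rw [firmPayoff, ← Finset.sum_sub_distrib]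
  exact Finset.sum_congr rfl fun w _ => by ring

theorem not_blocks_of_forall_sum_le {a : W → F → ℝ} {b : Finset W → F → ℝ}
    {𝒯 : F → Set (Finset W)} {s : W → F → ℝ} {X : W → Option F}
    (h : ∀ f, ∀ D ∈ 𝒯 f, (∑ w ∈ D, a w f) + b D f ≤
      (∑ w ∈ D, workerPayoff a s X w) + firmPayoff b s X f) :
    ¬ Blocks a b 𝒯 s X := by
  rintro ⟨f, D, hD, r, hworkers, hfirm, hstrict⟩
  have hsplit : (∑ w ∈ D, a w f) + b D f =
      (∑ w ∈ D, (a w f + r w)) + (b D f - ∑ w ∈ D, r w) := by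
    rw [Finset.sum_add_distrib]; ring
  have := h f D hD
  rcases hstrict with ⟨w, hw, hlt⟩ | hlt
  · linarith [Finset.sum_lt_sum hworkers ⟨w, hw, hlt⟩]
  · linarith [Finset.sum_le_sum hworkers]

end Arrangement

theorem duality_gives_rstable_arrangement_general
    {W F : Type*} [Fintype W] [DecidableEq W] [Fintype F] [DecidableEq F]
    (a c : W → F → ℝ) (ℋ : F → Set (Finset W)) (lo hi : F → Finset W → ℤ)
    (x : W → F → ℝ)
    (hfeas : LPLBFeasible ℋ lo hi x)
    (hopt : ∀ y : W → F → ℝ, LPLBFeasible ℋ lo hi y →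
      LPobj (fun w f => a w f + c w f) y ≤ LPobj (fun w f => a w f + c w f) x)
    (h01 : ∀ w f, x w f = 0 ∨ x w f = 1) :
    ∃ (X : W → Option F) (s : W → F → ℝ),
      (∀ w f, X w = some f ↔ x w f = 1) ∧
      RFeasible (fun f => quotaSets (ℋ f) (lo f) (hi f)) X ∧
      (∀ w, 0 ≤ workerPayoff a s X w) ∧
      (∀ f : F, ∀ D ∈ quotaSets (ℋ f) (lo f) (hi f),
        ∑ w ∈ D, (a w f + c w f) ≤
          (∑ w ∈ D, workerPayoff a s X w) +
            firmPayoff (fun D' f' => ∑ w ∈ D', c w f') s X f) ∧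
      RStable a (fun D f => ∑ w ∈ D, c w f)
        (fun f => quotaSets (ℋ f) (lo f) (hi f)) s X := by
  obtain ⟨X, hX⟩ := exists_assignment_iff_eq_one hfeas.1 hfeas.2.1
  obtain ⟨u, hu0, hslack, hbest⟩ := exists_worker_prices_of_optimal hfeas hopt
  have hunmatched : ∀ w, X w = none → u w = 0 := fun w hw => by_contra fun hu => by
    obtain ⟨f, hf⟩ := exists_eq_one_of_sum_eq_one (h01 w) (hslack w hu)
    simp [(hX w f).mpr hf] at hw
  have hRF : RFeasible (fun f => quotaSets (ℋ f) (lo f) (hi f)) X := fun f D hD => by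
    have hcard : ∑ w ∈ D, x w f = ((assigned X f ∩ D).card : ℝ) := by
      simpa using sum_mul_eq_sum_assigned_inter hX h01 1 D f
    have := hfeas.2.2 f D hD
    rw [hcard] at this
    exact_mod_cast this
  have hIR : ∀ w, 0 ≤ workerPayoff a (fun w f => u w - a w f) X w := fun w => by
    rw [workerPayoff_sub_eq hunmatched]; exact hu0 w
  have hcore : ∀ f, ∀ D ∈ quotaSets (ℋ f) (lo f) (hi f), ∑ w ∈ D, (a w f + c w f) ≤
      (∑ w ∈ D, workerPayoff a (fun w f => u w - a w f) X w) +
        firmPayoff (fun D' f' => ∑ w ∈ D', c w f') (fun w f => u w - a w f) X f := by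
    intro f D hD
    have := hbest f D hD
    rw [sum_mul_eq_sum_assigned_inter hX h01, inter_univ] at this
    simp only [workerPayoff_sub_eq hunmatched, firmPayoff_sub_eq, Finset.sum_sub_distrib] at this ⊢
    linarith
  exact ⟨X, _, hX, hRF, hIR, hcore, hRF, hIR, not_blocks_of_forall_sum_le fun f D hD => by
    simpa [Finset.sum_add_distrib, add_assoc] using hcore f D hD⟩

/-- **Duality and r-stable arrangements.** If the matching LP with lower and upper bound
constraints has an integral optimal solution `x`, then there are salaries `s` such that
the induced arrangement `(X*, s)` is r-feasible, individually rational for all workers,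
satisfies `Σ_{w∈D} α w f ≤ Σ_{w∈D} u w + v f` for every firm `f` and feasible `D ∈ 𝒯 f`,
and in particular is r-stable. -/
theorem duality_gives_rstable_arrangement
    {W F : Type*} [Fintype W] [DecidableEq W] [Fintype F] [DecidableEq F]
    (a c : W → F → ℝ) (ℋ : F → Set (Finset W)) (lo hi : F → Finset W → ℤ)
    (hle : ∀ f : F, ∀ D ∈ ℋ f, lo f D ≤ hi f D)
    (x : W → F → ℝ)
    (hfeas : LPLBFeasible ℋ lo hi x)
    (hopt : ∀ y : W → F → ℝ, LPLBFeasible ℋ lo hi y →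
      LPobj (fun w f => a w f + c w f) y ≤ LPobj (fun w f => a w f + c w f) x)
    (h01 : ∀ w f, x w f = 0 ∨ x w f = 1) :
    ∃ (X : W → Option F) (s : W → F → ℝ),
      (∀ w f, X w = some f ↔ x w f = 1) ∧
      RFeasible (fun f => quotaSets (ℋ f) (lo f) (hi f)) X ∧
      (∀ w, 0 ≤ workerPayoff a s X w) ∧
      (∀ f : F, ∀ D ∈ quotaSets (ℋ f) (lo f) (hi f),
        ∑ w ∈ D, (a w f + c w f) ≤
          (∑ w ∈ D, workerPayoff a s X w) +
            firmPayoff (fun D' f' => ∑ w ∈ D', c w f') s X f) ∧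
      RStable a (fun D f => ∑ w ∈ D, c w f)
        (fun f => quotaSets (ℋ f) (lo f) (hi f)) s X :=
  duality_gives_rstable_arrangement_general a c ℋ lo hi x hfeas hopt h01

end TwoSidedMatching
end

section
/- There is an instance with one firm and linear firm values in which the demand-theory substitutes condition fails. Specifically, let the workers be w1, w2, w3, let the firm's feasible sets be 𝒯 = {{w2}, {w1,w3}}, and let its values be c(w1) = 1.5, c(w2) = 2.5, c(w3) = 1.5 with b(D) = Σ_{w∈D} c(w). Then at salaries s = (0.5, 1, 0.5), the unique profit-maximizing feasible set (maximizing b(D) − Σ_{w∈D} s_w over D ∈ 𝒯) is {w1, w3}; after raising only worker w1's salary to 1.1 (salaries (1.1, 1, 0.5)), the unique profit-maximizing feasible set is {w2}. Hence no profit-maximizing set at the new salaries contains {w1,w3} ∖ {w1} = {w3}, so the substitutes condition is violated. -/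
open Finset

namespace TwoSidedMatching

variable {W F : Type*} [Fintype W] [DecidableEq W] [Fintype F] [DecidableEq F]

/-- **Violation of the demand-theory substitutes condition.** With feasible sets
`𝒯 = {{w2}, {w1, w3}}`, values `c = (1.5, 2.5, 1.5)` and linear firm value
`b D = Σ_{w∈D} c w`: at salaries `(0.5, 1, 0.5)` the unique profit-maximizing feasible
set is `{w1, w3}`; at salaries `(1.1, 1, 0.5)` (only `w1`'s salary raised) the unique
profit-maximizing feasible set is `{w2}`; hence no profit-maximizing set at the new
salaries contains `{w1, w3} \ {w1} = {w3}`, violating the substitutes condition. -/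
theorem substitutes_condition_violated
    (c : Fin 3 → ℝ) (hc : c = ![1.5, 2.5, 1.5])
    (s s' : Fin 3 → ℝ) (hs : s = ![0.5, 1, 0.5]) (hs' : s' = ![1.1, 1, 0.5])
    (𝒯 : Set (Finset (Fin 3))) (hT : 𝒯 = {({1} : Finset (Fin 3)), ({0, 2} : Finset (Fin 3))}) :
    (({0, 2} : Finset (Fin 3)) ∈ 𝒯 ∧
      ∀ D ∈ 𝒯, D ≠ ({0, 2} : Finset (Fin 3)) →
        (∑ w ∈ D, c w) - ∑ w ∈ D, s w <
          (∑ w ∈ ({0, 2} : Finset (Fin 3)), c w) - ∑ w ∈ ({0, 2} : Finset (Fin 3)), s w) ∧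
    (({1} : Finset (Fin 3)) ∈ 𝒯 ∧
      ∀ D ∈ 𝒯, D ≠ ({1} : Finset (Fin 3)) →
        (∑ w ∈ D, c w) - ∑ w ∈ D, s' w <
          (∑ w ∈ ({1} : Finset (Fin 3)), c w) - ∑ w ∈ ({1} : Finset (Fin 3)), s' w) ∧
    ¬ ∃ D' ∈ 𝒯, (∀ D ∈ 𝒯, (∑ w ∈ D, c w) - ∑ w ∈ D, s' w ≤
          (∑ w ∈ D', c w) - ∑ w ∈ D', s' w) ∧
        (({0, 2} : Finset (Fin 3)) \ ({0} : Finset (Fin 3))) ⊆ D' := by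
  subst hc hs hs' hT
  refine ⟨⟨Or.inr rfl, ?_⟩, ⟨Or.inl rfl, ?_⟩, ?_⟩
  · rintro D (rfl | rfl) hne
    · simp [Finset.sum_insert, Fin.sum_univ_succ]; norm_num
    · exact absurd rfl hne
  · rintro D (rfl | rfl) hne
    · exact absurd rfl hne
    · simp [Finset.sum_insert, Fin.sum_univ_succ]; norm_num
  · rintro ⟨D', (rfl | rfl), hmax, hsub⟩
    · have := hsub (by decide : (2 : Fin 3) ∈ ({0,2} : Finset (Fin 3)) \ {0})
      simp at this
    · have := hmax {1} (Or.inl rfl)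
      simp [Finset.sum_insert] at this
      norm_num at this

end TwoSidedMatching
end
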